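/- arXiv:1402.0727 — 2 statements merged into one kernel-verified Lean document; each statement's English description precedes it below -/
import Mathlib

section
/- For m ≥ 0, 0 ≤ s ≤ m, and Im τ > 0, the function Φ₁(τ,z₁,z₂), viewed as a meromorphic function of z₁ with z₂ fixed, has simple poles exactly at z₁ = n + jτ (n, j ∈ ℤ), and the residue at z₁ = n + jτ equals −(1/(2πi)) e^{−2πij(m+1)z₂}. -/
/-!
The `j`-th summand of `Φ₁` is `e^{-2πisz₁}` times the `j`-th term of the Jacobi theta series
`θ((m+1)(z₁+z₂) - sτ, 2(m+1)τ)`, divided by `1 - e^{2πi(z₁+jτ)}`. The Gaussian bound on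
theta terms, together with `‖1 - e^{2πi(z₁+jτ)}‖ ≥ 1/2` as soon as `|j| Im τ` exceeds the width of
a horizontal strip, makes the series converge normally on strips once finitely many terms are
removed. Hence `Φ₁` is holomorphic wherever no denominator vanishes, i.e. off `ℤ + τℤ`. At `n + jτ`
only the `(-j)`-th denominator vanishes, simply and with derivative `-2πi`, so the residue is the
value `e^{-2πij(m+1)z₂}` of that numerator there, divided by `-2πi`.
-/

noncomputable section

open Complex

/-- The mock theta numerator `Φ₁^{[m;s]}(τ,z₁,z₂)`, with `q = e^{2πiτ}`. -/
def Phi1 (m : ℕ) (s : ℤ) (τ z₁ z₂ : ℂ) : ℂ :=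
  ∑' j : ℤ,
    Complex.exp (2 * (Real.pi : ℂ) * I * ((m : ℂ) + 1) * (j : ℂ) * (z₁ + z₂)) *
      Complex.exp (-(2 * (Real.pi : ℂ) * I) * (s : ℂ) * z₁) *
      Complex.exp (2 * (Real.pi : ℂ) * I * τ) ^ (j ^ 2 * ((m : ℤ) + 1) - j * s) /
      (1 - Complex.exp (2 * (Real.pi : ℂ) * I * z₁) * Complex.exp (2 * (Real.pi : ℂ) * I * τ) ^ j)

open Filter Topology
open scoped Real

namespace Complex

theorem norm_exp_two_pi_I_mul (z : ℂ) : ‖cexp (2 * π * I * z)‖ = Real.exp (-(2 * π * z.im)) := by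
  rw [Complex.norm_exp]
  congr 1
  simp [mul_re, mul_im]

theorem exp_two_pi_I_mul_eq_one_iff {z : ℂ} : cexp (2 * π * I * z) = 1 ↔ ∃ n : ℤ, z = n := by
  rw [Complex.exp_eq_one_iff]
  refine exists_congr fun n => ?_
  rw [mul_comm (n : ℂ)]
  exact mul_right_inj' two_pi_I_ne_zero

theorem one_half_le_norm_one_sub_exp_two_pi_I_mul {z : ℂ} (hz : 1 ≤ |z.im|) :
    1 / 2 ≤ ‖1 - cexp (2 * π * I * z)‖ := by
  have hπ : 1 ≤ 2 * π := by linarith [Real.pi_gt_three]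
  refine le_trans ?_ (abs_norm_sub_norm_le 1 _)
  rw [norm_one, norm_exp_two_pi_I_mul]
  rcases le_abs'.mp hz with hneg | hpos
  · have := Real.add_one_le_exp (-(2 * π * z.im))
    rw [abs_of_neg (by nlinarith)]
    nlinarith
  · have hle : Real.exp (-(2 * π * z.im)) ≤ 1 / 2 := by
      rw [Real.exp_neg, inv_le_comm₀ (Real.exp_pos _) (by norm_num)]
      nlinarith [Real.add_one_le_exp (2 * π * z.im)]
    rw [abs_of_pos (by linarith)]
    linarith

end Complex

theorem tendsto_sub_mul_div_of_hasDerivAt {𝕜 : Type*} [NontriviallyNormedField 𝕜]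
    {f g : 𝕜 → 𝕜} {f' p : 𝕜} (hg : ContinuousAt g p) (hf : HasDerivAt f f' p) (hfp : f p = 0)
    (hf' : f' ≠ 0) :
    Tendsto (fun w => (w - p) * (g w / f w)) (𝓝[≠] p) (𝓝 (g p / f')) := by
  rw [div_eq_mul_inv (g p)]
  refine ((hg.tendsto.mono_left nhdsWithin_le_nhds).mul
    ((hasDerivAt_iff_tendsto_slope.1 hf).inv₀ hf')).congr fun w => ?_
  rw [slope_def_field, hfp, sub_zero, inv_div]
  ring

theorem differentiableAt_tsum_of_eventually_norm_le {ι F : Type*} [NormedAddCommGroup F]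
    [NormedSpace ℂ F] [CompleteSpace F] {f : ι → ℂ → F} {u : ι → ℝ} {U : Set ℂ} {p : ℂ}
    (hu : Summable u) (hU : IsOpen U) (hpU : p ∈ U) (hf : ∀ i, DifferentiableAt ℂ (f i) p)
    (hfU : ∀ᶠ i in cofinite, DifferentiableOn ℂ (f i) U ∧ ∀ w ∈ U, ‖f i w‖ ≤ u i) :
    DifferentiableAt ℂ (fun w => ∑' i, f i w) p := by
  classical
  set S := (eventually_cofinite.1 hfU).toFinset
  have hgood : ∀ i : ↥((S : Set ι)ᶜ), DifferentiableOn ℂ (f i) U ∧ ∀ w ∈ U, ‖f i w‖ ≤ u i :=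
    fun i => not_not.1 (by simpa [S] using i.2)
  have htail : DifferentiableOn ℂ (fun w => ∑' i : ↥((S : Set ι)ᶜ), f i w) U :=
    differentiableOn_tsum_of_summable_norm (hu.subtype _) (fun i => (hgood i).1) hU
      fun i => (hgood i).2
  refine ((DifferentiableAt.fun_sum (u := S) fun i _ => hf i).add
    (htail.differentiableAt (hU.mem_nhds hpU))).congr_of_eventuallyEq ?_
  filter_upwards [hU.mem_nhds hpU] with w hw
  exact ((hu.of_norm_bounded_eventually (hfU.mono fun i hi => hi.2 w hw)).sum_add_tsum_compl).symm

namespace Phi1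

def term (m : ℕ) (s : ℤ) (τ z₂ : ℂ) (j : ℤ) (w : ℂ) : ℂ :=
  cexp (-(2 * π * I * s * w)) *
      jacobiTheta₂_term j ((m + 1) * (w + z₂) - s * τ) (2 * (m + 1) * τ) /
    (1 - cexp (2 * π * I * (w + j * τ)))

variable (m : ℕ) (s : ℤ) {τ : ℂ} (z₂ : ℂ)

theorem eq_tsum_term (w : ℂ) : Phi1 m s τ w z₂ = ∑' j, term m s τ z₂ j w := by
  refine tsum_congr fun j => ?_
  rw [term, jacobiTheta₂_term, ← Complex.exp_int_mul, ← Complex.exp_int_mul, ← Complex.exp_add,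
    ← Complex.exp_add, ← Complex.exp_add, ← Complex.exp_add]
  congr 2
  · push_cast
    ring
  · ring_nf

theorem differentiableAt_term {j : ℤ} {w : ℂ} (hw : cexp (2 * π * I * (w + j * τ)) ≠ 1) :
    DifferentiableAt ℂ (term m s τ z₂ j) w :=
  .div (by unfold jacobiTheta₂_term; fun_prop) (by fun_prop) (sub_ne_zero.2 hw.symm)

theorem norm_numerator_le (hτ : 0 < τ.im) {T : ℝ} (j : ℤ) {w : ℂ} (hw : |w.im| ≤ T) :
    ‖cexp (-(2 * π * I * s * w)) *
        jacobiTheta₂_term j ((m + 1) * (w + z₂) - s * τ) (2 * (m + 1) * τ)‖ ≤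
      Real.exp (2 * π * (|(s : ℝ)| * T)) * Real.exp (-π * (2 * (m + 1) * τ.im * j ^ 2 -
        2 * ((m + 1) * (T + |z₂.im|) + |(s : ℝ)| * τ.im) * |j|)) := by
  have hsw : |s * w.im| ≤ |(s : ℝ)| * T := by
    rw [abs_mul]; exact mul_le_mul_of_nonneg_left hw (abs_nonneg _)
  rw [norm_mul]
  refine mul_le_mul ?_ (norm_jacobiTheta₂_term_le (by positivity) ?_ (by simp) j)
    (norm_nonneg _) (Real.exp_pos _).le
  · rw [show -(2 * π * I * s * w) = 2 * π * I * (-s * w) by ring, norm_exp_two_pi_I_mul,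
      Real.exp_le_exp]
    have : s * w.im ≤ |(s : ℝ)| * T := (le_abs_self _).trans hsw
    simpa using mul_le_mul_of_nonneg_left this (by positivity : (0 : ℝ) ≤ 2 * π)
  · have him : ((m + 1) * (w + z₂) - s * τ).im = (m + 1) * (w.im + z₂.im) - s * τ.im := by simp
    calc |((m + 1) * (w + z₂) - s * τ).im|
        ≤ (m + 1) * (|w.im| + |z₂.im|) + |(s : ℝ)| * τ.im := by
          rw [him]
          refine (abs_sub _ _).trans (add_le_add ?_ ?_)
          · rw [abs_mul, abs_of_pos (by positivity : (0 : ℝ) < m + 1)]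
            exact mul_le_mul_of_nonneg_left (abs_add_le _ _) (by positivity)
          · rw [abs_mul, abs_of_pos hτ]
      _ ≤ (m + 1) * (T + |z₂.im|) + |(s : ℝ)| * τ.im := by gcongr

omit z₂ in
theorem eventually_one_half_le_norm_denom (hτ : 0 < τ.im) (T : ℝ) :
    ∀ᶠ j : ℤ in cofinite, ∀ w : ℂ, |w.im| < T →
      1 / 2 ≤ ‖1 - cexp (2 * π * I * (w + j * τ))‖ := by
  have hj : ∀ᶠ j : ℤ in cofinite, (T + 1) / τ.im ≤ |(j : ℝ)| := by
    simpa only [Function.comp_apply, Real.norm_eq_abs] using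
      (tendsto_norm_cocompact_atTop.comp Int.tendsto_coe_cofinite).eventually_ge_atTop _
  filter_upwards [hj] with j hj w hw
  apply one_half_le_norm_one_sub_exp_two_pi_I_mul
  have hjτ : T + 1 ≤ |(j : ℝ) * τ.im| := by
    rwa [abs_mul, abs_of_pos hτ, ← div_le_iff₀ hτ]
  have : |(j : ℝ) * τ.im| - |-w.im| ≤ |j * τ.im - -w.im| := abs_sub_abs_le_abs_sub _ _
  rw [abs_neg, sub_neg_eq_add] at this
  simp only [add_im, mul_im, intCast_re, intCast_im, zero_mul, add_zero]
  rw [add_comm]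
  linarith

theorem exists_summable_bound (hτ : 0 < τ.im) (T : ℝ) :
    ∃ u : ℤ → ℝ, Summable u ∧ ∀ᶠ j : ℤ in cofinite, ∀ w : ℂ, |w.im| < T →
      cexp (2 * π * I * (w + j * τ)) ≠ 1 ∧ ‖term m s τ z₂ j w‖ ≤ u j := by
  set S := (m + 1) * (T + |z₂.im|) + |(s : ℝ)| * τ.im
  refine ⟨fun j => 2 * Real.exp (2 * π * (|(s : ℝ)| * T)) *
    Real.exp (-π * (2 * (m + 1) * τ.im * j ^ 2 - 2 * S * |j|)), ?_, ?_⟩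
  · have := summable_pow_mul_jacobiTheta₂_term_bound S (by positivity : 0 < 2 * (m + 1) * τ.im) 0
    simp only [pow_zero, one_mul] at this
    exact this.mul_left _
  · filter_upwards [eventually_one_half_le_norm_denom hτ T] with j hj w hw
    have hden := hj w hw
    refine ⟨fun h => by norm_num [h] at hden, ?_⟩
    rw [term, norm_div, div_le_iff₀ (by linarith),
      show ∀ a b c : ℝ, 2 * a * b * c = a * b * (2 * c) by intros; ring]
    exact (norm_numerator_le m s z₂ hτ j hw.le).trans
      (le_mul_of_one_le_right (by positivity) (by linarith))

theorem summable_term (hτ : 0 < τ.im) (w : ℂ) : Summable fun j => term m s τ z₂ j w := by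
  obtain ⟨u, hu, hev⟩ := exists_summable_bound m s z₂ hτ (|w.im| + 1)
  exact hu.of_norm_bounded_eventually (hev.mono fun j hj => (hj w (lt_add_one _)).2)

theorem eq_term_add_tsum_ite (hτ : 0 < τ.im) (k : ℤ) (w : ℂ) :
    Phi1 m s τ w z₂ = term m s τ z₂ k w + ∑' j, if j = k then 0 else term m s τ z₂ j w := by
  rw [eq_tsum_term, (summable_term m s z₂ hτ w).tsum_eq_add_tsum_ite k]

theorem differentiableAt_tsum_ite_term (hτ : 0 < τ.im) (k : ℤ) {p : ℂ}
    (hp : ∀ j ≠ k, cexp (2 * π * I * (p + j * τ)) ≠ 1) :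
    DifferentiableAt ℂ (fun w => ∑' j, if j = k then 0 else term m s τ z₂ j w) p := by
  obtain ⟨u, hu, hev⟩ := exists_summable_bound m s z₂ hτ (|p.im| + 1)
  refine differentiableAt_tsum_of_eventually_norm_le hu
    (isOpen_lt (continuous_abs.comp continuous_im) continuous_const)
    (show |p.im| < |p.im| + 1 from lt_add_one _) (fun j => ?_) ?_
  · split_ifs with hj
    · exact differentiableAt_const 0
    · exact differentiableAt_term m s z₂ (hp j hj)
  · filter_upwards [hev, eventually_cofinite_ne k] with j hj hjk
    simp only [if_neg hjk]
    exact ⟨fun w hw => (differentiableAt_term m s z₂ (hj w hw).1).differentiableWithinAt,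
      fun w hw => (hj w hw).2⟩

theorem differentiableAt (hτ : 0 < τ.im) {z : ℂ} (hz : ∀ n j : ℤ, z ≠ n + j * τ) :
    DifferentiableAt ℂ (fun w => Phi1 m s τ w z₂) z := by
  have hden (j : ℤ) : cexp (2 * π * I * (z + j * τ)) ≠ 1 := fun h => by
    obtain ⟨n, hn⟩ := exp_two_pi_I_mul_eq_one_iff.1 h
    exact hz n (-j) (by push_cast; linear_combination hn)
  simp_rw [eq_term_add_tsum_ite m s z₂ hτ 0]
  exact (differentiableAt_term m s z₂ (hden 0)).add
    (differentiableAt_tsum_ite_term m s z₂ hτ 0 fun j _ => hden j)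

omit z₂ in
theorem exp_ne_one_of_ne_neg (hτ : 0 < τ.im) (n : ℤ) {j j' : ℤ} (hj' : j' ≠ -j) :
    cexp (2 * π * I * (n + j * τ + j' * τ)) ≠ 1 := fun h => by
  obtain ⟨n', hn'⟩ := exp_two_pi_I_mul_eq_one_iff.1 h
  have him := congrArg im hn'
  simp only [add_im, mul_im, intCast_re, intCast_im, zero_mul, add_zero, zero_add] at him
  have : (j : ℝ) + j' = 0 :=
    (mul_eq_zero.1 (by linarith : ((j : ℝ) + j') * τ.im = 0)).resolve_right hτ.ne'
  exact hj' (by linarith [show j + j' = 0 by exact_mod_cast this])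

theorem tendsto_sub_mul_term (n j : ℤ) :
    Tendsto (fun w => (w - (n + j * τ)) * term m s τ z₂ (-j) w) (𝓝[≠] (n + j * τ))
      (𝓝 (-(1 / (2 * π * I)) * cexp (-(2 * π * I) * j * (m + 1) * z₂))) := by
  set p : ℂ := n + j * τ
  have hperiod : cexp (2 * π * I * (p + (-j : ℤ) * τ)) = 1 :=
    exp_two_pi_I_mul_eq_one_iff.2 ⟨n, by push_cast [p]; ring⟩
  have hden :
      HasDerivAt (fun w => 1 - cexp (2 * π * I * (w + (-j : ℤ) * τ))) (-(2 * π * I)) p := by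
    refine ((((hasDerivAt_id p).add_const ((-j : ℤ) * τ)).const_mul (2 * π * I)).cexp.const_sub
      1).congr_deriv ?_
    rw [id_eq, hperiod, one_mul, mul_one]
  have hnum : cexp (-(2 * π * I * s * p)) *
      jacobiTheta₂_term (-j) ((m + 1) * (p + z₂) - s * τ) (2 * (m + 1) * τ) =
        cexp (-(2 * π * I) * j * (m + 1) * z₂) := by
    rw [jacobiTheta₂_term, ← Complex.exp_add, show -(2 * π * I * s * p) +
        (2 * π * I * (-j : ℤ) * ((m + 1) * (p + z₂) - s * τ) + π * I * (-j : ℤ) ^ 2 *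
          (2 * (m + 1) * τ)) =
        -(2 * π * I) * j * (m + 1) * z₂ + (-(s + j * (m + 1)) * n : ℤ) * (2 * π * I) by
          push_cast [p]; ring,
      Complex.exp_add, exp_int_mul_two_pi_mul_I, mul_one]
  have := tendsto_sub_mul_div_of_hasDerivAt (g := fun w => cexp (-(2 * π * I * s * w)) *
      jacobiTheta₂_term (-j) ((m + 1) * (w + z₂) - s * τ) (2 * (m + 1) * τ))
    (by unfold jacobiTheta₂_term; fun_prop) hden (sub_eq_zero.2 hperiod.symm)
    (neg_ne_zero.2 two_pi_I_ne_zero)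
  rw [hnum] at this
  rwa [show ∀ a b : ℂ, -(1 / b) * a = a / -b by intros; ring]

theorem tendsto_sub_mul (hτ : 0 < τ.im) (n j : ℤ) :
    Tendsto (fun w => (w - (n + j * τ)) * Phi1 m s τ w z₂) (𝓝[≠] (n + j * τ))
      (𝓝 (-(1 / (2 * π * I)) * cexp (-(2 * π * I) * j * (m + 1) * z₂))) := by
  have hrest := (differentiableAt_tsum_ite_term m s z₂ hτ (-j)
    fun j' hj' => exp_ne_one_of_ne_neg hτ n hj').continuousAt.tendsto
  have hsub : Tendsto (fun w => w - (n + j * τ)) (𝓝 (n + j * τ)) (𝓝 0) := by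
    simpa using (continuous_sub_right ((n : ℂ) + j * τ)).tendsto (n + j * τ)
  simpa [eq_term_add_tsum_ite m s z₂ hτ (-j), mul_add] using
    (tendsto_sub_mul_term m s z₂ n j).add ((hsub.mul hrest).mono_left nhdsWithin_le_nhds)

end Phi1

theorem stmt2_general (m : ℕ) (s : ℤ)
    (τ z₂ : ℂ) (hτ : 0 < τ.im) :
    (∀ z₁ : ℂ, (∀ n j : ℤ, z₁ ≠ (n : ℂ) + (j : ℂ) * τ) →
      DifferentiableAt ℂ (fun w => Phi1 m s τ w z₂) z₁) ∧
    (∀ n j : ℤ,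
      Filter.Tendsto (fun w => (w - ((n : ℂ) + (j : ℂ) * τ)) * Phi1 m s τ w z₂)
        (nhdsWithin ((n : ℂ) + (j : ℂ) * τ) {((n : ℂ) + (j : ℂ) * τ)}ᶜ)
        (nhds (-(1 / (2 * (Real.pi : ℂ) * I)) *
          Complex.exp (-(2 * (Real.pi : ℂ) * I) * (j : ℂ) * ((m : ℂ) + 1) * z₂)))) :=
  ⟨fun _ hz => Phi1.differentiableAt m s z₂ hτ hz, Phi1.tendsto_sub_mul m s z₂ hτ⟩

/-- As a function of `z₁`, `Φ₁` is holomorphic away from the lattice `ℤ + τℤ` and has a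
simple pole at each lattice point `n + jτ` with residue `−(1/(2πi)) e^{−2πij(m+1)z₂}`. -/
theorem stmt2 (m : ℕ) (s : ℤ) (hs0 : 0 ≤ s) (hs1 : s ≤ (m : ℤ))
    (τ z₂ : ℂ) (hτ : 0 < τ.im) :
    (∀ z₁ : ℂ, (∀ n j : ℤ, z₁ ≠ (n : ℂ) + (j : ℂ) * τ) →
      DifferentiableAt ℂ (fun w => Phi1 m s τ w z₂) z₁) ∧
    (∀ n j : ℤ,
      Filter.Tendsto (fun w => (w - ((n : ℂ) + (j : ℂ) * τ)) * Phi1 m s τ w z₂)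
        (nhdsWithin ((n : ℂ) + (j : ℂ) * τ) {((n : ℂ) + (j : ℂ) * τ)}ᶜ)
        (nhds (-(1 / (2 * (Real.pi : ℂ) * I)) *
          Complex.exp (-(2 * (Real.pi : ℂ) * I) * (j : ℂ) * ((m : ℂ) + 1) * z₂)))) :=
  stmt2_general m s τ z₂ hτ
end
end

section
/- Let m ≥ 0, 0 ≤ s ≤ m, Im τ > 0, and let Θ_{j,m+1}(τ,z) = Σ_{n∈ℤ} e^{2πi(m+1)z(n + j/(2(m+1)))} q^{(m+1)(n + j/(2(m+1)))²}. Then Φ₁(τ,z₁,z₂) − e^{2πi(m+1)z₁} Φ₁(τ,z₁,z₂+τ) = Σ_{k=0}^{m} e^{πi(k−s)(z₁−z₂)} q^{−(k−s)²/(4(m+1))} Θ_{k−s,m+1}(τ, z₁+z₂). -/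
noncomputable section

open Complex

/-- The classical theta function `Θ_{j,m₁}(τ,z)` of degree `m₁`,
where `q^x = e^{2πiτx}`. -/
def Theta (j : ℤ) (m₁ : ℕ) (τ z : ℂ) : ℂ :=
  ∑' n : ℤ,
    Complex.exp (2 * (Real.pi : ℂ) * I * (m₁ : ℂ) * z * ((n : ℂ) + (j : ℂ) / (2 * (m₁ : ℂ)))) *
      Complex.exp (2 * (Real.pi : ℂ) * I * τ * (m₁ : ℂ) * ((n : ℂ) + (j : ℂ) / (2 * (m₁ : ℂ))) ^ 2)

/-!
With `x_j = e^{2πiz₁} q^j`, the `j`-th term of `Φ₁(τ,z₁,z₂)` is `a_j / (1 - x_j)`, and the shift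
`z₂ ↦ z₂ + τ` turns `e^{2πi(m+1)z₁} a_j` into `a_j x_j^{m+1}`. So the left side is
`∑_j a_j (1 - x_j^{m+1}) / (1 - x_j) = ∑_{k=0}^{m} ∑_j a_j x_j^k`, and `a_j x_j^k` is, up to a
factor independent of `j`, the `j`-th term of the Jacobi theta series `ϑ(z, 2(m+1)τ)` at
`z = (m+1)(z₁+z₂) + (k-s)τ`; so is the `j`-th term of `Θ_{k-s,m+1}(τ, z₁+z₂)`. All series
converge absolutely: the theta terms decay like `|q|^{(m+1)j²}`, while `x_j → 0` as `j → ∞` and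
`x_j → ∞` as `j → -∞` keep `1 / (1 - x_j)` bounded for large `|j|`.
-/

open Real Filter Topology

section GeometricDenominator

variable {𝕜 : Type*} [NormedField 𝕜]

lemma norm_inv_one_sub_le_two {x : 𝕜} (hx : ‖x‖ ≤ 1 / 2 ∨ 2 ≤ ‖x‖) : ‖(1 - x)⁻¹‖ ≤ 2 := by
  have hlow : 1 / 2 ≤ ‖1 - x‖ := by
    rcases hx with hx | hx
    · linarith [norm_one (α := 𝕜) ▸ norm_sub_norm_le (1 : 𝕜) x]
    · linarith [norm_one (α := 𝕜) ▸ norm_sub_rev x 1 ▸ norm_sub_norm_le x (1 : 𝕜)]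
  rw [norm_inv]
  calc ‖1 - x‖⁻¹ ≤ (1 / 2)⁻¹ := inv_anti₀ (by norm_num) hlow
    _ = 2 := by norm_num

lemma tendsto_zpow_atTop_nhds_zero_of_norm_lt_one {q : 𝕜} (hq : ‖q‖ < 1) :
    Tendsto (fun j : ℤ => q ^ j) atTop (𝓝 0) := by
  rw [← Nat.map_cast_int_atTop, tendsto_map'_iff]
  simpa [Function.comp_def] using tendsto_pow_atTop_nhds_zero_of_norm_lt_one hq

lemma tendsto_norm_zpow_atBot_atTop {q : 𝕜} (hq₀ : q ≠ 0) (hq : ‖q‖ < 1) :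
    Tendsto (fun j : ℤ => ‖q ^ j‖) atBot atTop := by
  rw [← map_neg_atTop, ← Nat.map_cast_int_atTop, map_map, tendsto_map'_iff]
  simpa [Function.comp_def] using
    tendsto_pow_atTop_atTop_of_one_lt ((one_lt_inv₀ (norm_pos_iff.2 hq₀)).2 hq)

lemma eventually_norm_inv_one_sub_mul_zpow_le_two {c q : 𝕜} (hc : c ≠ 0) (hq₀ : q ≠ 0)
    (hq : ‖q‖ < 1) : ∀ᶠ j : ℤ in cofinite, ‖(1 - c * q ^ j)⁻¹‖ ≤ 2 := by
  rw [Int.cofinite_eq, eventually_sup]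
  constructor
  · have hbig : Tendsto (fun j : ℤ => ‖c * q ^ j‖) atBot atTop := by
      simpa only [norm_mul] using
        (tendsto_norm_zpow_atBot_atTop hq₀ hq).const_mul_atTop (norm_pos_iff.2 hc)
    filter_upwards [hbig.eventually_ge_atTop 2] with j hj using norm_inv_one_sub_le_two (.inr hj)
  · have hsmall : Tendsto (fun j : ℤ => ‖c * q ^ j‖) atTop (𝓝 0) := by
      simpa using ((tendsto_zpow_atTop_nhds_zero_of_norm_lt_one hq).const_mul c).norm
    filter_upwards [hsmall.eventually_le_const (by norm_num : (0 : ℝ) < 1 / 2)] with j hj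
      using norm_inv_one_sub_le_two (.inl hj)

end GeometricDenominator

lemma Summable.mul_of_eventually_norm_le {ι 𝕜 : Type*} [RCLike 𝕜] {f g : ι → 𝕜}
    (hf : Summable f) {C : ℝ} (hg : ∀ᶠ i in cofinite, ‖g i‖ ≤ C) :
    Summable fun i => f i * g i :=
  .of_norm_bounded_eventually ((summable_norm_iff.2 hf).mul_right C) <| hg.mono fun i hi => by
    rw [norm_mul]
    exact mul_le_mul_of_nonneg_left hi (norm_nonneg _)

lemma tsum_div_one_sub_sub_tsum_mul_pow_div {ι K : Type*} [Field K] [TopologicalSpace K]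
    [IsTopologicalRing K] [T2Space K] {a x : ι → K} {M : ℕ} (hx : ∀ i, x i ≠ 1)
    (h₁ : Summable fun i => a i / (1 - x i)) (h₂ : Summable fun i => a i * x i ^ M / (1 - x i))
    (hk : ∀ k < M, Summable fun i => a i * x i ^ k) :
    ∑' i, a i / (1 - x i) - ∑' i, a i * x i ^ M / (1 - x i) =
      ∑ k ∈ Finset.range M, ∑' i, a i * x i ^ k := by
  rw [← h₁.tsum_sub h₂, ← Summable.tsum_finsetSum fun k hk' => hk k (Finset.mem_range.1 hk')]
  refine tsum_congr fun i => ?_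
  have hx' : 1 - x i ≠ 0 := sub_ne_zero.2 (hx i).symm
  rw [← Finset.mul_sum, ← sub_div, div_eq_iff hx']
  linear_combination a i * geom_sum_mul (x i) M

lemma theta_eq_exp_mul_jacobiTheta₂ (r : ℤ) {M : ℕ} (hM : M ≠ 0) (τ w : ℂ) :
    Theta r M τ w = cexp (π * I * r * w + π * I * τ * r ^ 2 / (2 * M)) *
      jacobiTheta₂ (M * w + r * τ) (2 * M * τ) := by
  rw [Theta, jacobiTheta₂, ← tsum_mul_left]
  refine tsum_congr fun n => ?_
  rw [jacobiTheta₂_term, ← Complex.exp_add, ← Complex.exp_add]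
  congr 1
  field_simp
  ring

/-- The ratio `x_j = e^{2πiz₁} q^j` of the geometric series hidden in the `j`-th term of `Φ₁`. -/
def phi1Ratio (τ z₁ : ℂ) (j : ℤ) : ℂ :=
  cexp (2 * π * I * z₁) * cexp (2 * π * I * τ) ^ j

def phi1Numer (m : ℕ) (s : ℤ) (τ z₁ z₂ : ℂ) (j : ℤ) : ℂ :=
  cexp (2 * π * I * ((m : ℂ) + 1) * j * (z₁ + z₂)) * cexp (-(2 * π * I) * s * z₁) *
    cexp (2 * π * I * τ) ^ (j ^ 2 * ((m : ℤ) + 1) - j * s)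

section Phi1Terms

variable (m : ℕ) (s : ℤ) (τ z₁ z₂ : ℂ)

lemma phi1_eq_tsum :
    Phi1 m s τ z₁ z₂ = ∑' j, phi1Numer m s τ z₁ z₂ j / (1 - phi1Ratio τ z₁ j) := rfl

lemma phi1Numer_mul_pow (k : ℕ) (j : ℤ) :
    phi1Numer m s τ z₁ z₂ j * phi1Ratio τ z₁ j ^ k =
      cexp (2 * π * I * (k - s) * z₁) *
        jacobiTheta₂_term j ((m + 1) * (z₁ + z₂) + (k - s) * τ) (2 * (m + 1) * τ) := by
  simp only [phi1Numer, phi1Ratio, jacobiTheta₂_term, ← Complex.exp_int_mul,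
    ← Complex.exp_nat_mul, ← Complex.exp_add]
  congr 1
  push_cast
  ring

lemma exp_mul_phi1Numer_add_self (j : ℤ) :
    cexp (2 * π * I * ((m : ℂ) + 1) * z₁) * phi1Numer m s τ z₁ (z₂ + τ) j =
      phi1Numer m s τ z₁ z₂ j * phi1Ratio τ z₁ j ^ (m + 1) := by
  simp only [phi1Numer, phi1Ratio, ← Complex.exp_int_mul, ← Complex.exp_nat_mul,
    ← Complex.exp_add]
  congr 1
  push_cast
  ring

lemma tsum_phi1Numer_mul_pow (k : ℕ) :
    ∑' j, phi1Numer m s τ z₁ z₂ j * phi1Ratio τ z₁ j ^ k =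
      cexp (2 * π * I * (k - s) * z₁) *
        jacobiTheta₂ ((m + 1) * (z₁ + z₂) + (k - s) * τ) (2 * (m + 1) * τ) := by
  simp only [phi1Numer_mul_pow, tsum_mul_left, jacobiTheta₂]

variable {τ}

lemma summable_jacobiTheta₂_term_two_mul (hτ : 0 < τ.im) (z : ℂ) :
    Summable fun j => jacobiTheta₂_term j z (2 * (m + 1) * τ) :=
  (summable_jacobiTheta₂_term_iff _ _).2 <| by
    simpa [Complex.mul_im] using (by positivity : (0 : ℝ) < 2 * (m + 1) * τ.im)

lemma summable_phi1Numer_mul_pow (hτ : 0 < τ.im) (k : ℕ) :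
    Summable fun j => phi1Numer m s τ z₁ z₂ j * phi1Ratio τ z₁ j ^ k := by
  simp only [phi1Numer_mul_pow]
  exact (summable_jacobiTheta₂_term_two_mul m hτ _).mul_left _

lemma summable_phi1Numer_mul_pow_div (hτ : 0 < τ.im) (k : ℕ) :
    Summable fun j => phi1Numer m s τ z₁ z₂ j * phi1Ratio τ z₁ j ^ k / (1 - phi1Ratio τ z₁ j) := by
  simp only [div_eq_mul_inv]
  exact (summable_phi1Numer_mul_pow m s z₁ z₂ hτ k).mul_of_eventually_norm_le
    (eventually_norm_inv_one_sub_mul_zpow_le_two (Complex.exp_ne_zero _) (Complex.exp_ne_zero _)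
      (UpperHalfPlane.norm_exp_two_pi_I_lt_one ⟨τ, hτ⟩))

lemma phi1Ratio_ne_one (hpole : ∀ n j : ℤ, z₁ ≠ n + j * τ) (j : ℤ) : phi1Ratio τ z₁ j ≠ 1 := by
  rw [phi1Ratio, ← Complex.exp_int_mul, ← Complex.exp_add]
  intro h
  obtain ⟨n, hn⟩ := Complex.exp_eq_one_iff.1 h
  refine hpole n (-j) (mul_left_cancel₀ two_pi_I_ne_zero ?_)
  push_cast
  linear_combination hn

end Phi1Terms

theorem stmt3_general (m : ℕ) (s : ℤ)
    (τ z₁ z₂ : ℂ) (hτ : 0 < τ.im)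
    (hpole : ∀ n j : ℤ, z₁ ≠ (n : ℂ) + (j : ℂ) * τ) :
    Phi1 m s τ z₁ z₂ -
        Complex.exp (2 * (Real.pi : ℂ) * I * ((m : ℂ) + 1) * z₁) * Phi1 m s τ z₁ (z₂ + τ) =
      ∑ k ∈ Finset.range (m + 1),
        Complex.exp ((Real.pi : ℂ) * I * ((k : ℂ) - (s : ℂ)) * (z₁ - z₂)) *
          Complex.exp (-(2 * (Real.pi : ℂ) * I * τ) *
            ((k : ℂ) - (s : ℂ)) ^ 2 / (4 * ((m : ℂ) + 1))) *
          Theta ((k : ℤ) - s) (m + 1) τ (z₁ + z₂) := by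
  have hshift : cexp (2 * π * I * ((m : ℂ) + 1) * z₁) * Phi1 m s τ z₁ (z₂ + τ) =
      ∑' j, phi1Numer m s τ z₁ z₂ j * phi1Ratio τ z₁ j ^ (m + 1) / (1 - phi1Ratio τ z₁ j) := by
    rw [phi1_eq_tsum, ← tsum_mul_left]
    exact tsum_congr fun j => by rw [← mul_div_assoc, exp_mul_phi1Numer_add_self]
  have hsum₀ : Summable fun j => phi1Numer m s τ z₁ z₂ j / (1 - phi1Ratio τ z₁ j) := by
    simpa using summable_phi1Numer_mul_pow_div m s z₁ z₂ hτ 0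
  rw [hshift, phi1_eq_tsum, tsum_div_one_sub_sub_tsum_mul_pow_div (phi1Ratio_ne_one z₁ hpole)
    hsum₀ (summable_phi1Numer_mul_pow_div m s z₁ z₂ hτ _)
    fun k _ => summable_phi1Numer_mul_pow m s z₁ z₂ hτ k]
  refine Finset.sum_congr rfl fun k _ => ?_
  rw [tsum_phi1Numer_mul_pow, theta_eq_exp_mul_jacobiTheta₂ _ (Nat.succ_ne_zero m), ← mul_assoc,
    ← Complex.exp_add, ← Complex.exp_add]
  push_cast
  congr 2
  field_simp
  ring

theorem stmt3 (m : ℕ) (s : ℤ) (hs0 : 0 ≤ s) (hs1 : s ≤ (m : ℤ))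
    (τ z₁ z₂ : ℂ) (hτ : 0 < τ.im)
    (hpole : ∀ n j : ℤ, z₁ ≠ (n : ℂ) + (j : ℂ) * τ) :
    Phi1 m s τ z₁ z₂ -
        Complex.exp (2 * (Real.pi : ℂ) * I * ((m : ℂ) + 1) * z₁) * Phi1 m s τ z₁ (z₂ + τ) =
      ∑ k ∈ Finset.range (m + 1),
        Complex.exp ((Real.pi : ℂ) * I * ((k : ℂ) - (s : ℂ)) * (z₁ - z₂)) *
          Complex.exp (-(2 * (Real.pi : ℂ) * I * τ) *
            ((k : ℂ) - (s : ℂ)) ^ 2 / (4 * ((m : ℂ) + 1))) *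
          Theta ((k : ℤ) - s) (m + 1) τ (z₁ + z₂) :=
  stmt3_general m s τ z₁ z₂ hτ hpole
end
end
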